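/- arXiv:1401.2065 — 4 statements merged into one kernel-verified Lean document; each statement's English description precedes it below -/
import Mathlib

section
/- A binary pattern query (i, j) with 1 ≤ i ≤ n has a jumbled occurrence in binary string S (i.e., some length-i substring of S has exactly j ones) if and only if m(i) ≤ j ≤ M(i), where m(i) and M(i) are respectively the minimum and maximum number of ones over all length-i substrings of S. -/
/-!
Sliding a length-`i` window one step to the right changes its number of ones by at most one.
So, as the start position runs from a window realizing the minimum `m(i)` to one realizing the
maximum `M(i)`, the count takes every value in between (a discrete intermediate value theorem).
-/

/-- Number of positions `k ∈ [p, p+i)` with `S k = true`. -/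
def ones (S : ℕ → Bool) (p i : ℕ) : ℕ :=
  ((Finset.Ico p (p + i)).filter fun k => S k = true).card

theorem exists_eq_of_forall_succ_le_add_one {f : ℕ → ℕ} (hf : ∀ k, f (k + 1) ≤ f k + 1)
    {a b j : ℕ} (hab : a ≤ b) (ha : f a ≤ j) (hb : j ≤ f b) : ∃ k ∈ Set.Icc a b, f k = j := by
  induction b, hab using Nat.le_induction with
  | base => exact ⟨a, Set.left_mem_Icc.2 le_rfl, le_antisymm ha hb⟩
  | succ b hab ih =>
    by_cases hjb : j ≤ f b
    · obtain ⟨k, ⟨hak, hkb⟩, hk⟩ := ih hjb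
      exact ⟨k, ⟨hak, hkb.trans b.le_succ⟩, hk⟩
    · exact ⟨b + 1, ⟨hab.trans b.le_succ, le_rfl⟩, by have := hf b; omega⟩

theorem exists_eq_of_forall_le_succ_add_one {f : ℕ → ℕ} (hf : ∀ k, f k ≤ f (k + 1) + 1)
    {a b j : ℕ} (hab : a ≤ b) (hb : f b ≤ j) (ha : j ≤ f a) : ∃ k ∈ Set.Icc a b, f k = j := by
  have hg : ∀ k, f (a + b - (k + 1)) ≤ f (a + b - k) + 1 := fun k => by
    rcases Nat.lt_or_ge k (a + b) with hk | hk
    · simpa [show a + b - k = a + b - (k + 1) + 1 by omega] using hf (a + b - (k + 1))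
    · simp [Nat.sub_eq_zero_of_le hk, Nat.sub_eq_zero_of_le (hk.trans k.le_succ)]
  obtain ⟨k, ⟨hak, hkb⟩, hk⟩ := exists_eq_of_forall_succ_le_add_one (f := fun k => f (a + b - k))
    hg hab (by simpa using hb) (by simpa using ha)
  exact ⟨a + b - k, ⟨by omega, by omega⟩, hk⟩

theorem exists_eq_of_mem_uIcc {f : ℕ → ℕ} (hup : ∀ k, f (k + 1) ≤ f k + 1)
    (hdown : ∀ k, f k ≤ f (k + 1) + 1) {a b j : ℕ} (hj : j ∈ Set.uIcc (f a) (f b)) :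
    ∃ k ∈ Set.uIcc a b, f k = j := by
  rcases le_total a b with hab | hba
  · rcases le_total (f a) (f b) with hf | hf
    · rw [Set.uIcc_of_le hf] at hj
      simpa [Set.uIcc_of_le hab] using exists_eq_of_forall_succ_le_add_one hup hab hj.1 hj.2
    · rw [Set.uIcc_of_ge hf] at hj
      simpa [Set.uIcc_of_le hab] using exists_eq_of_forall_le_succ_add_one hdown hab hj.1 hj.2
  · rcases le_total (f a) (f b) with hf | hf
    · rw [Set.uIcc_of_le hf] at hj
      simpa [Set.uIcc_of_ge hba] using exists_eq_of_forall_le_succ_add_one hdown hba hj.1 hj.2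
    · rw [Set.uIcc_of_ge hf] at hj
      simpa [Set.uIcc_of_ge hba] using exists_eq_of_forall_succ_le_add_one hup hba hj.1 hj.2

section ones

variable (S : ℕ → Bool) (p i : ℕ)

theorem ones_eq_sum : ones S p i = ∑ k ∈ Finset.Ico p (p + i), if S k then 1 else 0 := by
  rw [ones, Finset.card_filter]

theorem ones_succ : ones S p (i + 1) = ones S p i + if S (p + i) then 1 else 0 := by
  rw [ones_eq_sum, ones_eq_sum, ← add_assoc, Finset.sum_Ico_succ_top (by omega)]

theorem ones_succ' : ones S p (i + 1) = (if S p then 1 else 0) + ones S (p + 1) i := by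
  rw [ones_eq_sum, ones_eq_sum, ← add_assoc, Finset.sum_eq_sum_Ico_succ_bot (by omega),
    add_right_comm]

theorem ones_succ_le : ones S (p + 1) i ≤ ones S p i + 1 := by
  have h₁ := ones_succ S p i
  have h₂ := ones_succ' S p i
  split_ifs at h₁ h₂ <;> omega

theorem ones_le_ones_succ : ones S p i ≤ ones S (p + 1) i + 1 := by
  have h₁ := ones_succ S p i
  have h₂ := ones_succ' S p i
  split_ifs at h₁ h₂ <;> omega

end ones

theorem stmt_2_general (n i j : ℕ) (S : ℕ → Bool) (h2 : i ≤ n) :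
    (∃ p, p + i ≤ n ∧ ones S p i = j) ↔
      ((Finset.range (n - i + 1)).image fun p => ones S p i).min'
          (Finset.Nonempty.image (Finset.nonempty_range_iff.mpr (Nat.succ_ne_zero _)) _) ≤ j ∧
      j ≤ ((Finset.range (n - i + 1)).image fun p => ones S p i).max'
          (Finset.Nonempty.image (Finset.nonempty_range_iff.mpr (Nat.succ_ne_zero _)) _) := by
  set F := (Finset.range (n - i + 1)).image fun p => ones S p i
  have hF : ∀ v, v ∈ F ↔ ∃ p, p + i ≤ n ∧ ones S p i = v := fun v => by
    simp only [F, Finset.mem_image, Finset.mem_range]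
    exact exists_congr fun p => and_congr_left' (by omega)
  constructor
  · rintro ⟨p, hp, rfl⟩
    exact ⟨F.min'_le _ ((hF _).2 ⟨p, hp, rfl⟩), F.le_max' _ ((hF _).2 ⟨p, hp, rfl⟩)⟩
  · rintro ⟨hmin, hmax⟩
    obtain ⟨p₀, hp₀, h₀⟩ := (hF _).1 (F.min'_mem _)
    obtain ⟨p₁, hp₁, h₁⟩ := (hF _).1 (F.max'_mem _)
    obtain ⟨k, ⟨-, hk⟩, rfl⟩ := exists_eq_of_mem_uIcc (f := fun p => ones S p i)
      (ones_succ_le S · i) (ones_le_ones_succ S · i) (a := p₀) (b := p₁)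
      (Set.Icc_subset_uIcc ⟨h₀ ▸ hmin, h₁ ▸ hmax⟩)
    exact ⟨k, by have := le_sup_iff.1 hk; omega, rfl⟩

theorem stmt_2 (n i j : ℕ) (S : ℕ → Bool) (h1 : 1 ≤ i) (h2 : i ≤ n) :
    (∃ p, p + i ≤ n ∧ ones S p i = j) ↔
      ((Finset.range (n - i + 1)).image fun p => ones S p i).min'
          (Finset.Nonempty.image (Finset.nonempty_range_iff.mpr (Nat.succ_ne_zero _)) _) ≤ j ∧
      j ≤ ((Finset.range (n - i + 1)).image fun p => ones S p i).max'
          (Finset.Nonempty.image (Finset.nonempty_range_iff.mpr (Nat.succ_ne_zero _)) _) :=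
  stmt_2_general n i j S h2
end

section
/- Adjacent-exchange lemma for connected subtrees: let T be a finite tree and U a connected vertex subset of size i ≥ 1 with i < |V(T)|. Then there exists a connected vertex subset U' of size i such that |U Δ U'| = 2 (U' is obtained from U by removing one vertex and adding one vertex) and U' is connected, and moreover the multiset of such moves connects any two connected i-subsets: any two connected vertex subsets of the same size i can be joined by a sequence of connected i-subsets in which consecutive sets differ in exactly one exchanged vertex. -/
/-!
In a tree, let `S` be a connected vertex set and `B ⊆ S` nonempty with `S \ B` connected, and
fix `v ∈ S \ B`. A vertex `x ∈ B` farthest from `v` lies on the path from `v` to no other vertex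
of `B`, and `S \ B` joins the remaining vertices to `v`, so `S - x` stays connected. Taking `S = U + c` for a neighbour `c ∉ U` of `U` and `B = U`
gives an exchange move out of every connected `U` that is not the whole vertex set.

To walk from `U` to `W`: if `U` meets `W`, absorb a neighbour `c ∈ W` and take `B = S \ W`, whose
complement `S ∩ W` is connected because connected sets of a tree intersect in a connected set;
this lowers `|U \ W|`. If `U` and `W` are disjoint, absorb the first vertex on a shortest path
from `U` to `W`; this lowers `dist(U, W)`.
-/

def ExchMove {V : Type*} [Fintype V] [DecidableEq V] (T : SimpleGraph V) (i : ℕ)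
    (W W' : Finset V) : Prop :=
  (T.induce (W' : Set V)).Connected ∧ W'.card = i ∧ (symmDiff W W').card = 2

open Finset

theorem Finset.card_symmDiff_insert_erase {α : Type*} [DecidableEq α] {s : Finset α} {a b : α}
    (ha : a ∉ s) (hb : b ∈ s) : #(symmDiff s ((insert a s).erase b)) = 2 := by
  have hba : b ≠ a := fun h => ha (h ▸ hb)
  rw [← card_pair hba]
  congr 1
  ext z
  simp only [mem_symmDiff, mem_erase, mem_insert, mem_singleton]
  grind

theorem exchMove_insert_erase {V : Type*} [Fintype V] [DecidableEq V] {T : SimpleGraph V}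
    {U : Finset V} {c x : V} (hc : c ∉ U) (hx : x ∈ U)
    (h : (T.induce (((insert c U).erase x : Finset V) : Set V)).Connected) :
    ExchMove T #U U ((insert c U).erase x) := by
  refine ⟨h, ?_, card_symmDiff_insert_erase hc hx⟩
  rw [card_erase_of_mem (mem_insert_of_mem hx), card_insert_of_notMem hc, Nat.add_sub_cancel]

namespace SimpleGraph

variable {V : Type*} {G : SimpleGraph V}

lemma IsAcyclic.eq_of_isPath (hG : G.IsAcyclic) {u v : V} {p q : G.Walk u v} (hp : p.IsPath)
    (hq : q.IsPath) : p = q :=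
  congrArg Subtype.val ((hG.subsingleton_path u v).elim ⟨p, hp⟩ ⟨q, hq⟩)

lemma IsAcyclic.length_eq_dist (hG : G.IsAcyclic) {u v : V} {p : G.Walk u v} (hp : p.IsPath) :
    p.length = G.dist u v := by
  obtain ⟨q, hq, hqd⟩ := p.reachable.exists_path_of_dist
  rw [← hqd, hG.eq_of_isPath hp hq]

lemma IsAcyclic.mem_of_mem_support_of_isPath (hG : G.IsAcyclic) {s : Set V}
    (hs : (G.induce s).Preconnected) {u v : V} (hu : u ∈ s) (hv : v ∈ s)
    {p : G.Walk u v} (hp : p.IsPath) : ∀ z ∈ p.support, z ∈ s := by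
  obtain ⟨q, hq⟩ := (hs ⟨u, hu⟩ ⟨v, hv⟩).exists_isPath
  have hqs : ∀ z ∈ (q.map (Embedding.induce s).toHom).support, z ∈ s := by
    intro z hz
    rw [Walk.support_map] at hz
    obtain ⟨a, -, rfl⟩ := List.mem_map.mp hz
    exact a.2
  have hpq : p = q.map (Embedding.induce s).toHom :=
    hG.eq_of_isPath hp (hq.map (Embedding.induce (G := G) s).injective)
  exact hpq ▸ hqs

lemma IsAcyclic.connected_induce_inter (hG : G.IsAcyclic) {s t : Set V}
    (hs : (G.induce s).Preconnected) (ht : (G.induce t).Preconnected) (hst : (s ∩ t).Nonempty) :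
    (G.induce (s ∩ t)).Connected := by
  obtain ⟨u, hu⟩ := hst
  refine induce_connected_of_patches u hu fun {v} hv => ⟨s ∩ t, subset_rfl, hu, hv, ?_⟩
  obtain ⟨p, hp⟩ := ((hs ⟨u, hu.1⟩ ⟨v, hv.1⟩).map (Embedding.induce s).toHom).exists_isPath
  have hpst : ∀ z ∈ p.support, z ∈ s ∩ t := fun z hz =>
    ⟨hG.mem_of_mem_support_of_isPath hs hu.1 hv.1 hp z hz,
      hG.mem_of_mem_support_of_isPath ht hu.2 hv.2 hp z hz⟩
  exact (p.induce _ hpst).reachable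

lemma connected_induce_insert_of_adj {s : Set V} (hs : (G.induce s).Connected) {u c : V}
    (hu : u ∈ s) (huc : G.Adj u c) : (G.induce (insert c s)).Connected := by
  have hsuc := induce_union_connected hs.preconnected
    (induce_pair_connected_of_adj huc).preconnected ⟨u, hu, Set.mem_insert u {c}⟩
  have hins : s ∪ {u, c} = insert c s := by
    ext z
    simp only [Set.mem_union, Set.mem_insert_iff, Set.mem_singleton_iff]
    grind
  rwa [hins] at hsuc

lemma exists_adj_mem_sdiff_of_preconnected {s t : Set V} (hs : (G.induce s).Preconnected)
    {u w : V} (hu : u ∈ s ∩ t) (hw : w ∈ s \ t) : ∃ a ∈ t, ∃ b ∈ s \ t, G.Adj a b := by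
  obtain ⟨q⟩ := hs ⟨u, hu.1⟩ ⟨w, hw.1⟩
  obtain ⟨d, -, hd₁, hd₂⟩ := q.exists_boundary_dart {z | z.1 ∈ t} hu.2 hw.2
  exact ⟨d.fst, hd₁, d.snd, ⟨d.snd.2, hd₂⟩, d.adj⟩

variable [DecidableEq V]

lemma IsAcyclic.exists_connected_induce_erase (hG : G.IsAcyclic) {s b : Finset V}
    (hs : (G.induce (s : Set V)).Connected) (hb : b.Nonempty)
    (hsb : (G.induce ((s \ b : Finset V) : Set V)).Connected) :
    ∃ x ∈ b, (G.induce ((s.erase x : Finset V) : Set V)).Connected := by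
  obtain ⟨⟨v, hv⟩⟩ := hsb.nonempty
  rw [Finset.mem_coe, Finset.mem_sdiff] at hv
  obtain ⟨x, hxb, hx⟩ := b.exists_max_image (G.dist v) hb
  have hvx : v ≠ x := fun h => hv.2 (h ▸ hxb)
  refine ⟨x, hxb, induce_connected_of_patches v (by simp [hv.1, hvx]) fun {y} hy => ?_⟩
  simp only [Finset.coe_erase, Set.mem_sdiff, Finset.mem_coe, Set.mem_singleton_iff] at hy
  by_cases hyb : y ∈ b
  · obtain ⟨p, hp⟩ := ((hs ⟨v, hv.1⟩ ⟨y, hy.1⟩).map (Embedding.induce _).toHom).exists_isPath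
    have hxp : x ∉ p.support := fun hxp => by
      have hlt := p.length_takeUntil_lt_length hxp (Ne.symm hy.2)
      rw [hG.length_eq_dist hp, hG.length_eq_dist (hp.takeUntil hxp)] at hlt
      exact (hx y hyb).not_gt hlt
    have hps : ∀ z ∈ p.support, z ∈ ((s.erase x : Finset V) : Set V) := fun z hz => by
      simp only [Finset.coe_erase, Set.mem_sdiff, Finset.mem_coe, Set.mem_singleton_iff]
      exact ⟨hG.mem_of_mem_support_of_isPath hs.preconnected hv.1 hy.1 hp z hz,
        fun h => hxp (h ▸ hz)⟩
    exact ⟨_, subset_rfl, _, _, (p.induce _ hps).reachable⟩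
  · have hsub : ((s \ b : Finset V) : Set V) ⊆ ((s.erase x : Finset V) : Set V) := by
      intro z
      simp only [Finset.coe_sdiff, Finset.coe_erase, Set.mem_sdiff, Finset.mem_coe,
        Set.mem_singleton_iff]
      exact fun h => ⟨h.1, fun hzx => h.2 (hzx ▸ hxb)⟩
    exact ⟨_, hsub, by simp [hv], by simp [hy.1, hyb], hsb.preconnected _ _⟩

lemma IsAcyclic.exists_connected_induce_insert_erase (hG : G.IsAcyclic) {s : Finset V}
    (hs : (G.induce (s : Set V)).Connected) {u c : V} (hu : u ∈ s) (hc : c ∉ s)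
    (huc : G.Adj u c) :
    ∃ x ∈ s, (G.induce (((insert c s).erase x : Finset V) : Set V)).Connected := by
  refine hG.exists_connected_induce_erase ?_ ⟨u, hu⟩ ?_
  · rw [Finset.coe_insert]
    exact connected_induce_insert_of_adj hs hu huc
  · rw [Finset.insert_sdiff_cancel hc, Finset.coe_singleton, induce_singleton_eq_top]
    exact connected_top

variable [Fintype V] {U W : Finset V}

theorem IsAcyclic.exists_exchMove_card_sdiff_lt (hG : G.IsAcyclic)
    (hU : (G.induce (U : Set V)).Connected) (hW : (G.induce (W : Set V)).Connected)
    (hUW : ¬U ⊆ W) {u v : V} (hu : u ∈ U) (hvW : v ∈ W) (hvU : v ∉ U) (huv : G.Adj u v) :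
    ∃ U', ExchMove G #U U U' ∧ v ∈ U' ∧ #(U' \ W) < #(U \ W) := by
  have hS : (G.induce ((insert v U : Finset V) : Set V)).Connected := by
    rw [coe_insert]
    exact connected_induce_insert_of_adj hU hu huv
  have hSW : (G.induce ((insert v U \ (insert v U \ W) : Finset V) : Set V)).Connected := by
    rw [sdiff_sdiff_right_self, inf_eq_inter, coe_inter]
    exact hG.connected_induce_inter hS.preconnected hW.preconnected ⟨v, by simp [hvW]⟩
  obtain ⟨y, hyU, hyW⟩ := not_subset.mp hUW
  obtain ⟨x, hx, hconn⟩ :=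
    hG.exists_connected_induce_erase hS ⟨y, by simp [hyU, hyW]⟩ hSW
  obtain ⟨hxS, hxW⟩ := mem_sdiff.mp hx
  have hxv : x ≠ v := by rintro rfl; exact hxW hvW
  have hxU : x ∈ U := (mem_insert.mp hxS).resolve_left hxv
  refine ⟨_, exchMove_insert_erase hvU hxU hconn, mem_erase.mpr ⟨hxv.symm, mem_insert_self v U⟩, ?_⟩
  calc #((insert v U).erase x \ W) = #((U \ W).erase x) := by
        rw [erase_sdiff_comm, insert_sdiff_of_mem U hvW]
    _ < #(U \ W) := card_erase_lt_of_mem (mem_sdiff.mpr ⟨hxU, hxW⟩)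

theorem IsTree.exists_exchMove_dist_lt (hG : G.IsTree) (hU : (G.induce (U : Set V)).Connected)
    (hUW : Disjoint U W) {u w : V} (hu : u ∈ U) (hw : w ∈ W) :
    ∃ U', ExchMove G #U U U' ∧ ∃ u' ∈ U', ∃ w' ∈ W, G.dist u' w' < G.dist u w := by
  obtain ⟨⟨u₀, w₀⟩, h₀, hmin⟩ := (U ×ˢ W).exists_min_image (fun p => G.dist p.1 p.2)
    ⟨(u, w), mem_product.mpr ⟨hu, hw⟩⟩
  obtain ⟨hu₀, hw₀⟩ := mem_product.mp h₀
  obtain ⟨p, hp⟩ := hG.connected.exists_walk_length_eq_dist u₀ w₀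
  cases p with
  | nil => exact absurd hw₀ (Finset.disjoint_left.mp hUW hu₀)
  | @cons _ c _ hadj q =>
    have hcw : G.dist c w₀ < G.dist u₀ w₀ := by
      have := dist_le q
      rw [Walk.length_cons] at hp
      omega
    have hcU : c ∉ U := fun hcU =>
      (hmin (c, w₀) (mem_product.mpr ⟨hcU, hw₀⟩)).not_gt hcw
    obtain ⟨x, hxU, hconn⟩ := hG.isAcyclic.exists_connected_induce_insert_erase hU hu₀ hcU hadj
    have hcx : c ≠ x := by rintro rfl; exact hcU hxU
    exact ⟨_, exchMove_insert_erase hcU hxU hconn, c, mem_erase.mpr ⟨hcx, mem_insert_self c U⟩,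
      w₀, hw₀, hcw.trans_le (hmin (u, w) (mem_product.mpr ⟨hu, hw⟩))⟩

theorem IsTree.exists_exchMove_dist_add_card_sdiff_lt (hG : G.IsTree)
    (hU : (G.induce (U : Set V)).Connected) (hW : (G.induce (W : Set V)).Connected)
    (hcard : #U = #W) (hne : U ≠ W) {u w : V} (hu : u ∈ U) (hw : w ∈ W) :
    ∃ U', ExchMove G #U U U' ∧
      ∃ u' ∈ U', ∃ w' ∈ W, G.dist u' w' + #(U' \ W) < G.dist u w + #(U \ W) := by
  have hUW : ¬U ⊆ W := fun h => hne (eq_of_subset_of_card_le h hcard.ge)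
  by_cases hdisj : Disjoint U W
  · obtain ⟨U', hmove, u', hu', w', hw', hlt⟩ := hG.exists_exchMove_dist_lt hU hdisj hu hw
    have hle : #(U' \ W) ≤ #(U \ W) := by
      rw [sdiff_eq_self_of_disjoint hdisj, ← hmove.2.1]
      exact card_le_card sdiff_subset
    exact ⟨U', hmove, u', hu', w', hw', by omega⟩
  · obtain ⟨a, haU, haW⟩ := not_disjoint_iff.mp hdisj
    obtain ⟨b, hbW, hbU⟩ := not_subset.mp fun h => hne (eq_of_subset_of_card_le h hcard.le).symm
    obtain ⟨a', ha', v, ⟨hvW, hvU⟩, hadj⟩ :=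
      exists_adj_mem_sdiff_of_preconnected (t := (U : Set V)) hW.preconnected
        ⟨haW, haU⟩ ⟨hbW, hbU⟩
    obtain ⟨U', hmove, hvU', hlt⟩ :=
      hG.isAcyclic.exists_exchMove_card_sdiff_lt hU hW hUW ha' hvW hvU hadj
    exact ⟨U', hmove, v, hvU', v, hvW, by rw [dist_self]; omega⟩

theorem IsTree.reflTransGen_exchMove (hG : G.IsTree) (hU : (G.induce (U : Set V)).Connected)
    (hW : (G.induce (W : Set V)).Connected) (hcard : #U = #W) :
    Relation.ReflTransGen (ExchMove G #U) U W := by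
  obtain ⟨⟨u, hu⟩⟩ := hU.nonempty
  obtain ⟨⟨w, hw⟩⟩ := hW.nonempty
  induction hn : G.dist u w + #(U \ W) using Nat.strong_induction_on generalizing U u w with
  | _ n ih =>
  by_cases hne : U = W
  · subst hne
    exact .refl
  obtain ⟨U', hmove, u', hu', w', hw', hlt⟩ :=
    hG.exists_exchMove_dist_add_card_sdiff_lt hU hW hcard hne hu hw
  have hcard' : #U' = #U := hmove.2.1
  refine .head hmove ?_
  rw [← hcard']
  exact ih _ (hn ▸ hlt) hmove.1 (hcard'.trans hcard) u' hu' w' hw' rfl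

end SimpleGraph

theorem stmt_7_general {V : Type*} [Fintype V] [DecidableEq V] (T : SimpleGraph V)
    (hT : T.IsTree) (i : ℕ) (hi2 : i < Fintype.card V)
    (U : Finset V) (hUc : (T.induce (U : Set V)).Connected) (hUi : U.card = i) :
    (∃ U' : Finset V, (T.induce (U' : Set V)).Connected ∧ U'.card = i ∧
        (symmDiff U U').card = 2) ∧
    (∀ W : Finset V, (T.induce (W : Set V)).Connected → W.card = i →
        Relation.ReflTransGen (ExchMove T i) U W) := by
  subst hUi
  refine ⟨?_, fun W hWc hWi => hT.reflTransGen_exchMove hUc hWc hWi.symm⟩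
  obtain ⟨⟨u, hu⟩⟩ := hUc.nonempty
  obtain ⟨w, -, hw⟩ := exists_mem_notMem_of_card_lt_card (s := U) (t := univ) (by rwa [card_univ])
  obtain ⟨d, -, hd₁, hd₂⟩ :=
    (hT.connected.preconnected u w).some.exists_boundary_dart (U : Set V) hu hw
  obtain ⟨x, hx, hconn⟩ :=
    hT.isAcyclic.exists_connected_induce_insert_erase hUc hd₁ hd₂ d.adj
  exact ⟨_, exchMove_insert_erase hd₂ hx hconn⟩

/-- Adjacent-exchange lemma: any connected `i`-subset with `1 ≤ i < |V|` admits an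
exchange move, and any two connected `i`-subsets are joined by a sequence of
exchange moves through connected `i`-subsets. -/
theorem stmt_7 {V : Type*} [Fintype V] [DecidableEq V] (T : SimpleGraph V)
    (hT : T.IsTree) (i : ℕ) (hi1 : 1 ≤ i) (hi2 : i < Fintype.card V)
    (U : Finset V) (hUc : (T.induce (U : Set V)).Connected) (hUi : U.card = i) :
    (∃ U' : Finset V, (T.induce (U' : Set V)).Connected ∧ U'.card = i ∧
        (symmDiff U U').card = 2) ∧
    (∀ W : Finset V, (T.induce (W : Set V)).Connected → W.card = i →
        Relation.ReflTransGen (ExchMove T i) U W) :=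
  stmt_7_general T hT i hi2 U hUc hUi
end

section
/- The min-ones array of a rooted subtree has unit steps: for a node v in a rooted binary tree with 0/1 labels, the array A_v (where A_v[i] is the minimum number of ones over connected subgraphs of T_v of size i containing v, for 1 ≤ i ≤ |T_v|) satisfies A_v[i+1] − A_v[i] ∈ {0, 1} for all 1 ≤ i < |T_v|, and analogously the maximum-ones array M_v satisfies M_v[i+1] − M_v[i] ∈ {0, 1}. -/
/-- Rooted binary trees with `Bool` labels; `nil` is the empty tree. -/
inductive BTree where
  | nil : BTree
  | node : Bool → BTree → BTree → BTree

namespace BTree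

/-- Number of nodes. -/
def size : BTree → ℕ
  | nil => 0
  | node _ l r => 1 + l.size + r.size

/-- Number of nodes labeled `true` (i.e. 1). -/
def onesB : BTree → ℕ
  | nil => 0
  | node b l r => (if b then 1 else 0) + l.onesB + r.onesB

/-- `Pruned t s` means `s` is obtained from `t` by pruning: `s` is either empty or
keeps the root of `t` together with pruned subtrees of the two children.  Nonempty
pruned subtrees of `t` correspond exactly to the connected subgraphs of `t`
containing the root of `t`. -/
def Pruned : BTree → BTree → Prop
  | nil, s => s = nil
  | node b l r, s => s = nil ∨ ∃ l' r', s = node b l' r' ∧ Pruned l l' ∧ Pruned r r'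

/-- `minOnes t i` : minimum number of 1-labeled nodes over all connected subgraphs of
`t` containing the root of `t` and having exactly `i` nodes; `⊤` if none exists. -/
noncomputable def minOnes (t : BTree) (i : ℕ) : ℕ∞ :=
  sInf {m : ℕ∞ | ∃ s, Pruned t s ∧ s ≠ nil ∧ s.size = i ∧ m = (s.onesB : ℕ∞)}

end BTree

namespace BTree

/-- `maxOnes t i` : maximum number of 1-labeled nodes over all connected subgraphs of
`t` containing the root of `t` and having exactly `i` nodes. -/
noncomputable def maxOnes (t : BTree) (i : ℕ) : ℕ∞ :=
  sSup {m : ℕ∞ | ∃ s, Pruned t s ∧ s ≠ nil ∧ s.size = i ∧ m = (s.onesB : ℕ∞)}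

end BTree

/-!
A pruned subtree with `i + 1` nodes loses one leaf to give a pruned subtree with `i` nodes,
and a pruned subtree with `i < t.size` nodes gains one node of `t` to give one with `i + 1`
nodes; either way the number of ones changes by `0` or `1`. Hence the achievable one-counts
at consecutive sizes are cofinal and coinitial in each other up to `+1`, which forces both
their infima and their suprema to move by `0` or `1`.
-/

namespace ENat

theorem eq_or_eq_add_one_of_le_of_le_add_one {x y : ℕ∞} (hxy : x ≤ y) (hyx : y ≤ x + 1) :
    y = x ∨ y = x + 1 := by
  rw [← Order.succ_eq_add_one, Order.le_succ_iff_eq_or_le, Order.succ_eq_add_one] at hyx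
  exact hyx.symm.imp (le_antisymm · hxy) id

variable {A B : Set ℕ∞}

theorem sInf_eq_or_eq_add_one (hBA : ∀ b ∈ B, ∃ a ∈ A, a ≤ b ∧ b ≤ a + 1)
    (hAB : ∀ a ∈ A, ∃ b ∈ B, a ≤ b ∧ b ≤ a + 1) :
    sInf B = sInf A ∨ sInf B = sInf A + 1 := by
  refine eq_or_eq_add_one_of_le_of_le_add_one ?_ ?_
  · exact sInf_le_sInf_of_isCoinitialFor fun b hb ↦ (hBA b hb).imp fun _ ⟨ha, hab, _⟩ ↦ ⟨ha, hab⟩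
  · rcases A.eq_empty_or_nonempty with rfl | hA
    · simp
    obtain ⟨b, hb, -, hba⟩ := hAB _ (csInf_mem hA)
    exact (sInf_le hb).trans hba

theorem sSup_eq_or_eq_add_one (hBA : ∀ b ∈ B, ∃ a ∈ A, a ≤ b ∧ b ≤ a + 1)
    (hAB : ∀ a ∈ A, ∃ b ∈ B, a ≤ b ∧ b ≤ a + 1) :
    sSup B = sSup A ∨ sSup B = sSup A + 1 := by
  refine eq_or_eq_add_one_of_le_of_le_add_one ?_ ?_
  · exact sSup_le_sSup_of_isCofinalFor fun a ha ↦ (hAB a ha).imp fun _ ⟨hb, hab, _⟩ ↦ ⟨hb, hab⟩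
  · refine sSup_le fun b hb ↦ ?_
    obtain ⟨a, ha, -, hba⟩ := hBA b hb
    exact hba.trans (add_le_add_left (le_sSup ha) 1)

end ENat

namespace BTree

theorem pruned_nil (t : BTree) : Pruned t nil := by
  cases t <;> simp [Pruned]

theorem Pruned.refl : ∀ t : BTree, Pruned t t
  | nil => rfl
  | node _ l r => Or.inr ⟨l, r, rfl, Pruned.refl l, Pruned.refl r⟩

theorem Pruned.trans : ∀ {t s u : BTree}, Pruned t s → Pruned s u → Pruned t u
  | nil, _, _, rfl, hsu => hsu
  | node _ _ _, _, _, Or.inl rfl, rfl => pruned_nil _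
  | node _ _ _, _, _, Or.inr ⟨_, _, rfl, _, _⟩, Or.inl rfl => Or.inl rfl
  | node _ _ _, _, _, Or.inr ⟨_, _, rfl, hl, hr⟩, Or.inr ⟨_, _, rfl, hl', hr'⟩ =>
      Or.inr ⟨_, _, rfl, hl.trans hl', hr.trans hr'⟩

theorem ne_nil_of_size_pos {s : BTree} (h : 0 < s.size) : s ≠ nil := by
  rintro rfl
  simp [size] at h

theorem exists_pruned_size_add_one_eq :
    ∀ {s : BTree}, s ≠ nil → ∃ s', Pruned s s' ∧ s'.size + 1 = s.size ∧
      s'.onesB ≤ s.onesB ∧ s.onesB ≤ s'.onesB + 1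
  | nil, h => absurd rfl h
  | node b l r, _ => by
    by_cases hl : l = nil
    · subst hl
      by_cases hr : r = nil
      · subst hr
        refine ⟨nil, pruned_nil _, rfl, ?_, ?_⟩ <;> simp only [onesB] <;> split <;> omega
      obtain ⟨r', hr', hsize, hle, hge⟩ := exists_pruned_size_add_one_eq hr
      refine ⟨node b nil r', Or.inr ⟨nil, r', rfl, rfl, hr'⟩, ?_, ?_, ?_⟩ <;>
        simp only [size, onesB] <;> omega
    obtain ⟨l', hl', hsize, hle, hge⟩ := exists_pruned_size_add_one_eq hl
    refine ⟨node b l' r, Or.inr ⟨l', r, rfl, hl', Pruned.refl r⟩, ?_, ?_, ?_⟩ <;>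
      simp only [size, onesB] <;> omega

theorem Pruned.exists_pruned_size_eq_add_one :
    ∀ {t s : BTree}, Pruned t s → s.size < t.size → ∃ s', Pruned t s' ∧
      s'.size = s.size + 1 ∧ s.onesB ≤ s'.onesB ∧ s'.onesB ≤ s.onesB + 1
  | nil, _, rfl, h => absurd h (lt_irrefl 0)
  | node b _ _, _, Or.inl rfl, _ => by
    refine ⟨node b nil nil, Or.inr ⟨nil, nil, rfl, pruned_nil _, pruned_nil _⟩, rfl, ?_, ?_⟩ <;>
      simp only [onesB] <;> split <;> omega
  | node b l r, _, Or.inr ⟨l', r', rfl, hl, hr⟩, hsize => by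
    simp only [size] at hsize
    by_cases hlt : l'.size < l.size
    · obtain ⟨l'', hl'', hsize', hle, hge⟩ := hl.exists_pruned_size_eq_add_one hlt
      refine ⟨node b l'' r', Or.inr ⟨l'', r', rfl, hl'', hr⟩, ?_, ?_, ?_⟩ <;>
        simp only [size, onesB] <;> omega
    obtain ⟨r'', hr'', hsize', hle, hge⟩ := hr.exists_pruned_size_eq_add_one (by omega)
    refine ⟨node b l' r'', Or.inr ⟨l', r'', rfl, hl, hr''⟩, ?_, ?_, ?_⟩ <;>
      simp only [size, onesB] <;> omega

def onesOfSize (t : BTree) (i : ℕ) : Set ℕ∞ :=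
  {m | ∃ s, Pruned t s ∧ s ≠ nil ∧ s.size = i ∧ m = (s.onesB : ℕ∞)}

theorem exists_mem_onesOfSize_of_mem_succ {t : BTree} {i : ℕ} (hi : 1 ≤ i) :
    ∀ b ∈ onesOfSize t (i + 1), ∃ a ∈ onesOfSize t i, a ≤ b ∧ b ≤ a + 1 := by
  rintro _ ⟨s, hs, hs_ne, hsize, rfl⟩
  obtain ⟨s', hs', hsize', hle, hge⟩ := exists_pruned_size_add_one_eq hs_ne
  exact ⟨s'.onesB, ⟨s', hs.trans hs', ne_nil_of_size_pos (by omega), by omega, rfl⟩,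
    by exact_mod_cast hle, by exact_mod_cast hge⟩

theorem exists_mem_onesOfSize_succ_of_mem {t : BTree} {i : ℕ} (hi : i < t.size) :
    ∀ a ∈ onesOfSize t i, ∃ b ∈ onesOfSize t (i + 1), a ≤ b ∧ b ≤ a + 1 := by
  rintro _ ⟨s, hs, -, rfl, rfl⟩
  obtain ⟨s', hs', hsize', hle, hge⟩ := hs.exists_pruned_size_eq_add_one hi
  exact ⟨s'.onesB, ⟨s', hs', ne_nil_of_size_pos (by omega), hsize', rfl⟩,
    by exact_mod_cast hle, by exact_mod_cast hge⟩

end BTree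

open BTree in
theorem stmt_11_general (t : BTree) (i : ℕ) (h1 : 1 ≤ i)
    (h2 : i < t.size) :
    (minOnes t (i + 1) = minOnes t i ∨ minOnes t (i + 1) = minOnes t i + 1) ∧
    (maxOnes t (i + 1) = maxOnes t i ∨ maxOnes t (i + 1) = maxOnes t i + 1) := by
  have shrink := exists_mem_onesOfSize_of_mem_succ (t := t) h1
  have grow := exists_mem_onesOfSize_succ_of_mem h2
  exact ⟨ENat.sInf_eq_or_eq_add_one shrink grow, ENat.sSup_eq_or_eq_add_one shrink grow⟩

open BTree in
/-- The min-ones and max-ones arrays of a rooted subtree have unit steps. -/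
theorem stmt_11 (t : BTree) (ht : t ≠ BTree.nil) (i : ℕ) (h1 : 1 ≤ i)
    (h2 : i < t.size) :
    (minOnes t (i + 1) = minOnes t i ∨ minOnes t (i + 1) = minOnes t i + 1) ∧
    (maxOnes t (i + 1) = maxOnes t i ∨ maxOnes t (i + 1) = maxOnes t i + 1) :=
  stmt_11_general t i h1 h2
end

section
/- Combining two subtree arrays via a string reduction: let X : Fin (x+1) → ℕ and Y : Fin (y+1) → ℕ be functions with X[0] = Y[0] = 0 and unit steps (consecutive differences in {0,1}), and let c ∈ {0,1}. Define F : Fin (x+y+2) → ℕ∞ for 1 ≤ i ≤ x+y+1 by F[i] = c + min over j+k = i−1, 0 ≤ j ≤ x, 0 ≤ k ≤ y of (X[j] + Y[k]). Then F[i] equals the minimum over all substrings of the binary string S = rev(ΔX) · c · ΔY of length i that contain the middle position c of the number of ones in that substring, where ΔX, ΔY are the unit-step difference bit-strings of X and Y. -/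
/-- The string `S = rev(ΔX) · c · ΔY` built from the unit-step difference bit-strings
of `X` (length `x`) and `Y` (length `y`), with the bit `c` at position `x`. -/
def combineStr (x : ℕ) (X Y : ℕ → ℕ) (c : Bool) : ℕ → Bool := fun t =>
  if t < x then decide (X (x - t) = X (x - t - 1) + 1)
  else if t = x then c
  else decide (Y (t - x) = Y (t - x - 1) + 1)

open Finset

def upBit (X : ℕ → ℕ) (j : ℕ) : Bool := decide (X (j + 1) = X j + 1)

theorem sum_range_upBit {X : ℕ → ℕ} {n : ℕ} (h0 : X 0 = 0)
    (hstep : ∀ j < n, X (j + 1) = X j ∨ X (j + 1) = X j + 1) :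
    ∑ j ∈ range n, (upBit X j).toNat = X n := by
  induction n with
  | zero => simp [h0]
  | succ n ih =>
    rw [sum_range_succ, ih fun j hj => hstep j (by omega)]
    rcases hstep n n.lt_succ_self with h | h <;> simp [upBit, h]

theorem ones_eq_sum_s12 (S : ℕ → Bool) (p i : ℕ) :
    ones S p i = ∑ t ∈ Ico p (p + i), (S t).toNat := by
  rw [ones, card_filter]
  exact sum_congr rfl fun t _ => by cases S t <;> rfl

section combineStr

variable {x : ℕ} {X Y : ℕ → ℕ} {c : Bool}

theorem combineStr_of_lt {t : ℕ} (ht : t < x) :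
    combineStr x X Y c t = upBit X (x - 1 - t) := by
  rw [combineStr, if_pos ht, upBit, show x - 1 - t + 1 = x - t by omega,
    show x - t - 1 = x - 1 - t by omega]

theorem combineStr_self : combineStr x X Y c x = c := by
  simp [combineStr]

theorem combineStr_add_one_add (k : ℕ) :
    combineStr x X Y c (x + 1 + k) = upBit Y k := by
  rw [combineStr, if_neg (by omega), if_neg (by omega), upBit,
    show x + 1 + k - x = k + 1 by omega, show k + 1 - 1 = k by omega]

theorem ones_combineStr {p i : ℕ} (hp : p ≤ x) (hpi : x < p + i) :
    ones (combineStr x X Y c) p i = ∑ j ∈ range (x - p), (upBit X j).toNat + c.toNat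
      + ∑ k ∈ range (p + i - 1 - x), (upBit Y k).toNat := by
  set f := fun t => (combineStr x X Y c t).toNat
  rw [ones_eq_sum_s12, ← sum_Ico_consecutive f hp hpi.le,
    sum_eq_sum_Ico_succ_bot hpi, sum_Ico_eq_sum_range, sum_Ico_eq_sum_range, ← add_assoc,
    ← sum_range_reflect]
  congr 2
  · refine sum_congr rfl fun j hj => ?_
    rw [mem_range] at hj
    simp only [f, combineStr_of_lt (show p + (x - p - 1 - j) < x by omega)]
    congr 3; omega
  · simp only [f, combineStr_self]
  · congr 1; omega
  · funext k
    simp only [f, combineStr_add_one_add]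

end combineStr

theorem stmt_12_general (x y : ℕ) (X Y : ℕ → ℕ) (c : Bool)
    (hX0 : X 0 = 0) (hY0 : Y 0 = 0)
    (hXstep : ∀ j < x, X (j + 1) = X j ∨ X (j + 1) = X j + 1)
    (hYstep : ∀ k < y, Y (k + 1) = Y k ∨ Y (k + 1) = Y k + 1)
    (i : ℕ) :
    ((if c then 1 else 0) : ℕ∞)
        + sInf {m : ℕ∞ | ∃ j k, j + k + 1 = i ∧ j ≤ x ∧ k ≤ y ∧ m = ((X j + Y k : ℕ) : ℕ∞)}
      = sInf {m : ℕ∞ | ∃ p, p ≤ x ∧ x < p + i ∧ p + i ≤ x + 1 + y ∧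
          m = ((ones (combineStr x X Y c) p i : ℕ) : ℕ∞)} := by
  have hwindow : ∀ p, p ≤ x → x < p + i → p + i ≤ x + 1 + y →
      ((ones (combineStr x X Y c) p i : ℕ) : ℕ∞)
        = (if c then 1 else 0) + ((X (x - p) + Y (p + i - 1 - x) : ℕ) : ℕ∞) := by
    intro p hp hpi hpy
    rw [ones_combineStr hp hpi, sum_range_upBit hX0 fun j hj => hXstep j (by omega),
      sum_range_upBit hY0 fun k hk => hYstep k (by omega)]
    cases c <;> simp; ring
  have hsets : {m : ℕ∞ | ∃ p, p ≤ x ∧ x < p + i ∧ p + i ≤ x + 1 + y ∧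
        m = ((ones (combineStr x X Y c) p i : ℕ) : ℕ∞)}
      = (fun m => (if c then 1 else 0) + m) ''
        {m : ℕ∞ | ∃ j k, j + k + 1 = i ∧ j ≤ x ∧ k ≤ y ∧ m = ((X j + Y k : ℕ) : ℕ∞)} := by
    ext m
    constructor
    · rintro ⟨p, hp, hpi, hpy, rfl⟩
      exact ⟨_, ⟨x - p, p + i - 1 - x, by omega, by omega, by omega, rfl⟩,
        (hwindow p hp hpi hpy).symm⟩
    · rintro ⟨_, ⟨j, k, rfl, hj, hk, rfl⟩, rfl⟩
      refine ⟨x - j, by omega, by omega, by omega, ?_⟩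
      rw [hwindow (x - j) (by omega) (by omega) (by omega),
        show x - (x - j) = j by omega, show x - j + (j + k + 1) - 1 - x = k by omega]
  rw [hsets, sInf_image, ENat.add_sInf]

/-- Combining two unit-step subtree arrays via the string reduction: for
`1 ≤ i ≤ x + y + 1`, `c + min_{j+k=i-1, j≤x, k≤y} (X j + Y k)` equals the minimum
ones-count over length-`i` windows of `rev(ΔX)·c·ΔY` containing position `x`. -/
theorem stmt_12 (x y : ℕ) (X Y : ℕ → ℕ) (c : Bool)
    (hX0 : X 0 = 0) (hY0 : Y 0 = 0)
    (hXstep : ∀ j < x, X (j + 1) = X j ∨ X (j + 1) = X j + 1)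
    (hYstep : ∀ k < y, Y (k + 1) = Y k ∨ Y (k + 1) = Y k + 1)
    (i : ℕ) (h1 : 1 ≤ i) (h2 : i ≤ x + y + 1) :
    ((if c then 1 else 0) : ℕ∞)
        + sInf {m : ℕ∞ | ∃ j k, j + k + 1 = i ∧ j ≤ x ∧ k ≤ y ∧ m = ((X j + Y k : ℕ) : ℕ∞)}
      = sInf {m : ℕ∞ | ∃ p, p ≤ x ∧ x < p + i ∧ p + i ≤ x + 1 + y ∧
          m = ((ones (combineStr x X Y c) p i : ℕ) : ℕ∞)} :=
  stmt_12_general x y X Y c hX0 hY0 hXstep hYstep i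
end
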